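/- arXiv:1107.4443 — 4 statements merged into one kernel-verified Lean document; each statement's English description precedes it below -/
import Mathlib

section
/- Let β > -1, s > -1, γ > 0 and 0 < p ≤ 1. There exists a constant C depending only on β, s, γ, p such that for every nonnegative increasing function G on [0,1): ∫₀¹ (∫₀¹ G(r)(1-r)^β (1-rρ)^{-γ} dr)^p (1-ρ)^s dρ ≤ C ∫₀¹ ∫₀¹ G(r)^p (1-r)^{βp+p-1} (1-rρ)^{-γp} (1-ρ)^s dρ dr. -/
/-!
Split `(0,1)` into the dyadic intervals `J n = [1 - 2⁻ⁿ, 1 - 2⁻ⁿ⁻¹)`. For fixed `ρ`, the integrand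
`f r = G r (1-r)^β (1-rρ)^(-γ)` satisfies `f r ≤ 4^|β| f r'` whenever `r ∈ J n`, `r' ∈ J (n+1)`: `G`
and `(1-rρ)^(-γ)` increase in `r`, and `1 - r` changes by a factor at most `4`. Hence
`(∫_{J n} f)^p ≤ (|J n| 4^|β| f r')^p`, and averaging over `r' ∈ J (n+1)`, where `1 - r' ≤ |J n|`,
gives `(∫_{J n} f)^p ≤ 2 (4^|β|)^p ∫_{J (n+1)} f^p (1-r)^(p-1)`. Summing over `n` with
`(∑ aₙ)^p ≤ ∑ aₙ^p` for `p ≤ 1` bounds the inner integral for each `ρ`; Tonelli does the rest.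
-/

open MeasureTheory Metric Set
open scoped ENNReal NNReal

noncomputable section

/-- Euclidean space `ℝⁿ`. -/
abbrev E (n : ℕ) := EuclideanSpace ℝ (Fin n)

/-- The Laplacian of `f` at `x`, as a sum of pure second derivatives. -/
def lap {n : ℕ} (f : E n → ℝ) (x : E n) : ℝ :=
  ∑ i : Fin n, iteratedFDeriv ℝ 2 f x ![EuclideanSpace.single i 1, EuclideanSpace.single i 1]

/-- `f` is harmonic on the open unit ball of `ℝⁿ`. -/
def HarmonicOnBall {n : ℕ} (f : E n → ℝ) : Prop :=
  ContDiffOn ℝ 2 f (ball 0 1) ∧ ∀ x ∈ ball (0 : E n) 1, lap f x = 0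

/-- The normalized surface measure on the unit sphere of `ℝⁿ` (normalized
`(n-1)`-dimensional Hausdorff measure restricted to the sphere). -/
def sphMeasure (n : ℕ) : Measure (E n) :=
  ((Measure.hausdorffMeasure ((n : ℝ) - 1) (sphere (0 : E n) 1))⁻¹ : ℝ≥0∞) •
    (Measure.hausdorffMeasure ((n : ℝ) - 1) : Measure (E n)).restrict (sphere (0 : E n) 1)

/-- `M₁(f,r) = ∫_S |f(r x')| dx'`. -/
def M1 (n : ℕ) (f : E n → ℝ) (r : ℝ) : ℝ := ∫ x', |f (r • x')| ∂(sphMeasure n)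

/-- `M_q(f,r) = (∫_S |f(r x')|^q dx')^{1/q}`. -/
def Mq (n : ℕ) (q : ℝ) (f : E n → ℝ) (r : ℝ) : ℝ :=
  (∫ x', |f (r • x')| ^ q ∂(sphMeasure n)) ^ (1 / q)

/-- `M_∞(f,r) = sup_{x' ∈ S} |f(r x')|`. -/
def Minf (n : ℕ) (f : E n → ℝ) (r : ℝ) : ℝ :=
  ⨆ x' : sphere (0 : E n) 1, |f (r • (x' : E n))|

/-- Normalized Lebesgue measure on `ℝⁿ` (total mass of the unit ball is 1). -/
def normVol (n : ℕ) : Measure (E n) :=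
  ((volume (ball (0 : E n) 1))⁻¹ : ℝ≥0∞) • (volume : Measure (E n))

/-- `A_α(f,r) = ∫_{|w| ≤ r} |f(w)| (1-|w|)^α dw` with normalized Lebesgue measure. -/
def Aalpha (n : ℕ) (α : ℝ) (f : E n → ℝ) (r : ℝ) : ℝ :=
  ∫ w in closedBall (0 : E n) r, |f w| * (1 - ‖w‖) ^ α ∂(normVol n)

open scoped Function

theorem ENNReal.rpow_tsum_le_tsum_rpow {ι : Type*} {p : ℝ} (hp0 : 0 < p) (hp1 : p ≤ 1)
    (a : ι → ℝ≥0∞) : (∑' i, a i) ^ p ≤ ∑' i, a i ^ p := by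
  classical
  have rpow_sum_le (s : Finset ι) : (∑ i ∈ s, a i) ^ p ≤ ∑ i ∈ s, a i ^ p := by
    induction s using Finset.induction with
    | empty => simp [ENNReal.zero_rpow_of_pos hp0]
    | insert i s hi ih =>
      rw [Finset.sum_insert hi, Finset.sum_insert hi]
      exact (ENNReal.rpow_add_le_add_rpow _ _ hp0.le hp1).trans (add_le_add le_rfl ih)
  rw [← ENNReal.le_rpow_inv_iff hp0]
  exact ENNReal.summable.tsum_le_of_sum_le fun s =>
    (ENNReal.le_rpow_inv_iff hp0).2 ((rpow_sum_le s).trans (ENNReal.sum_le_tsum s))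

lemma Real.rpow_le_rpow_abs_mul_rpow {x y c β : ℝ} (hy : 0 < y) (hyx : y ≤ x) (hxc : x ≤ c * y) :
    x ^ β ≤ c ^ |β| * y ^ β := by
  have hc : 1 ≤ c := le_of_mul_le_mul_right (by linarith) hy
  rcases le_or_gt 0 β with hβ | hβ
  · calc x ^ β ≤ (c * y) ^ β := Real.rpow_le_rpow (by linarith) hxc hβ
      _ = c ^ β * y ^ β := Real.mul_rpow (by linarith) hy.le
      _ ≤ c ^ |β| * y ^ β := by
        gcongr
        exact le_abs_self β
  · calc x ^ β ≤ y ^ β := Real.rpow_le_rpow_of_nonpos hy hyx hβ.le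
      _ ≤ c ^ |β| * y ^ β :=
        le_mul_of_one_le_left (by positivity) (Real.one_le_rpow hc (abs_nonneg β))

def dyadicIco (n : ℕ) : Set ℝ := Ico (1 - 2⁻¹ ^ n) (1 - 2⁻¹ ^ (n + 1))

lemma volume_dyadicIco (n : ℕ) : volume (dyadicIco n) = ENNReal.ofReal (2⁻¹ ^ (n + 1)) := by
  rw [dyadicIco, Real.volume_Ico, pow_succ]
  congr 1
  ring

lemma mem_dyadicIco_iff {n : ℕ} {r : ℝ} :
    r ∈ dyadicIco n ↔ 2⁻¹ ^ (n + 1) < 1 - r ∧ 1 - r ≤ 2⁻¹ ^ n := by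
  rw [dyadicIco, mem_Ico]
  constructor <;> rintro ⟨h, h'⟩ <;> constructor <;> linarith

lemma pairwise_disjoint_dyadicIco : Pairwise (Disjoint on dyadicIco) := by
  have hmono : Monotone fun n : ℕ => 1 - (2⁻¹ : ℝ) ^ n := fun m n hmn =>
    sub_le_sub_left (pow_le_pow_of_le_one (by norm_num) (by norm_num) hmn) 1
  exact hmono.pairwise_disjoint_on_Ico_succ

lemma iUnion_dyadicIco : ⋃ n, dyadicIco n = Ico 0 1 := by
  ext r
  simp only [mem_iUnion, mem_dyadicIco_iff, mem_Ico]
  constructor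
  · rintro ⟨n, hn, hn'⟩
    constructor
    · linarith [pow_le_one₀ (n := n) (by norm_num : (0:ℝ) ≤ 2⁻¹) (by norm_num)]
    · linarith [pow_pos (by norm_num : (0:ℝ) < 2⁻¹) (n + 1)]
  · rintro ⟨hr0, hr1⟩
    exact exists_nat_pow_near_of_lt_one (by linarith) (by linarith) (by norm_num) (by norm_num)

lemma setLIntegral_Ioo_zero_one_eq_tsum_dyadicIco (f : ℝ → ℝ≥0∞) :
    ∫⁻ r in Ioo 0 1, f r = ∑' n, ∫⁻ r in dyadicIco n, f r := by
  rw [setLIntegral_congr Ioo_ae_eq_Ico, ← iUnion_dyadicIco,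
    lintegral_iUnion (s := dyadicIco) (fun _ => measurableSet_Ico) pairwise_disjoint_dyadicIco]

lemma tsum_setLIntegral_dyadicIco_succ_le (f : ℝ → ℝ≥0∞) :
    ∑' n, ∫⁻ r in dyadicIco (n + 1), f r ≤ ∫⁻ r in Ioo 0 1, f r := by
  rw [setLIntegral_Ioo_zero_one_eq_tsum_dyadicIco]
  exact ENNReal.tsum_comp_le_tsum_of_injective (add_left_injective 1) _

lemma dyadicIco_succ_comparable {n : ℕ} {r r' : ℝ} (hr : r ∈ dyadicIco n)
    (hr' : r' ∈ dyadicIco (n + 1)) : 0 ≤ r ∧ r ≤ r' ∧ r' < 1 ∧ 1 - r ≤ 4 * (1 - r') := by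
  rw [mem_dyadicIco_iff] at hr hr'
  have h2 : (2⁻¹ : ℝ) ^ n = 4 * 2⁻¹ ^ (n + 2) := by ring
  refine ⟨?_, by linarith, by linarith [pow_pos (by norm_num : (0:ℝ) < 2⁻¹) (n + 2)], by linarith⟩
  linarith [pow_le_one₀ (n := n) (by norm_num : (0:ℝ) ≤ 2⁻¹) (by norm_num)]

section
variable {f : ℝ → ℝ≥0∞} {K : ℝ≥0} {p : ℝ}

lemma rpow_setLIntegral_dyadicIco_le_of_mem (hp0 : 0 < p) (hp1 : p ≤ 1)
    (hf : ∀ r r', 0 ≤ r → r ≤ r' → r' < 1 → 1 - r ≤ 4 * (1 - r') → f r ≤ K * f r') {n : ℕ}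
    {r' : ℝ} (hr' : r' ∈ dyadicIco (n + 1)) :
    (∫⁻ r in dyadicIco n, f r) ^ p ≤ ENNReal.ofReal (2⁻¹ ^ (n + 2)) *
      (2 * K ^ p * (f r' ^ p * ENNReal.ofReal ((1 - r') ^ (p - 1)))) := by
  set ℓ : ℝ := 2⁻¹ ^ (n + 1)
  have hℓ : 0 < ℓ := by positivity
  have hint : ∫⁻ r in dyadicIco n, f r ≤ K * f r' * ENNReal.ofReal ℓ :=
    calc ∫⁻ r in dyadicIco n, f r ≤ ∫⁻ _ in dyadicIco n, K * f r' :=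
          setLIntegral_mono' measurableSet_Ico fun r hr => by
            obtain ⟨h0, hle, h1, h4⟩ := dyadicIco_succ_comparable hr hr'
            exact hf r r' h0 hle h1 h4
      _ = K * f r' * ENNReal.ofReal ℓ := by rw [setLIntegral_const, volume_dyadicIco]
  obtain ⟨hr'1, hr'ℓ⟩ := mem_dyadicIco_iff.1 hr'
  replace hr'1 : 0 < 1 - r' := lt_trans (by positivity) hr'1
  have hℓp : ℓ ^ p ≤ 2⁻¹ ^ (n + 2) * 2 * (1 - r') ^ (p - 1) :=
    calc ℓ ^ p = ℓ * ℓ ^ (p - 1) := by rw [Real.rpow_sub_one hℓ.ne', mul_div_cancel₀ _ hℓ.ne']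
      _ ≤ ℓ * (1 - r') ^ (p - 1) :=
        mul_le_mul_of_nonneg_left (Real.rpow_le_rpow_of_nonpos hr'1 hr'ℓ (by linarith)) hℓ.le
      _ = 2⁻¹ ^ (n + 2) * 2 * (1 - r') ^ (p - 1) := by ring
  calc (∫⁻ r in dyadicIco n, f r) ^ p ≤ (K * f r' * ENNReal.ofReal ℓ) ^ p :=
        ENNReal.rpow_le_rpow hint hp0.le
    _ = K ^ p * f r' ^ p * ENNReal.ofReal (ℓ ^ p) := by
        rw [ENNReal.mul_rpow_of_nonneg _ _ hp0.le, ENNReal.mul_rpow_of_nonneg _ _ hp0.le,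
          ENNReal.ofReal_rpow_of_nonneg hℓ.le hp0.le]
    _ ≤ K ^ p * f r' ^ p * ENNReal.ofReal (2⁻¹ ^ (n + 2) * 2 * (1 - r') ^ (p - 1)) := by gcongr
    _ = _ := by
        rw [ENNReal.ofReal_mul (by positivity), ENNReal.ofReal_mul (by positivity),
          ENNReal.ofReal_ofNat]
        ring

lemma rpow_setLIntegral_dyadicIco_le (hp0 : 0 < p) (hp1 : p ≤ 1)
    (hf : ∀ r r', 0 ≤ r → r ≤ r' → r' < 1 → 1 - r ≤ 4 * (1 - r') → f r ≤ K * f r') (n : ℕ) :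
    (∫⁻ r in dyadicIco n, f r) ^ p ≤
      2 * (K : ℝ≥0∞) ^ p *
        ∫⁻ r in dyadicIco (n + 1), f r ^ p * ENNReal.ofReal ((1 - r) ^ (p - 1)) := by
  set v := ENNReal.ofReal (2⁻¹ ^ (n + 2))
  refine (ENNReal.mul_le_mul_iff_right (a := v) (by simp [v]) ENNReal.ofReal_ne_top).1 ?_
  calc v * (∫⁻ r in dyadicIco n, f r) ^ p
      = ∫⁻ _ in dyadicIco (n + 1), (∫⁻ r in dyadicIco n, f r) ^ p := by
        rw [setLIntegral_const, volume_dyadicIco, mul_comm]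
    _ ≤ ∫⁻ r' in dyadicIco (n + 1),
          v * (2 * K ^ p * (f r' ^ p * ENNReal.ofReal ((1 - r') ^ (p - 1)))) :=
        setLIntegral_mono' measurableSet_Ico fun _ hr' =>
          rpow_setLIntegral_dyadicIco_le_of_mem hp0 hp1 hf hr'
    _ = _ := by
        rw [lintegral_const_mul' _ _ ENNReal.ofReal_ne_top,
          lintegral_const_mul' _ _ (by finiteness)]

theorem rpow_setLIntegral_Ioo_zero_one_le (hp0 : 0 < p) (hp1 : p ≤ 1)
    (hf : ∀ r r', 0 ≤ r → r ≤ r' → r' < 1 → 1 - r ≤ 4 * (1 - r') → f r ≤ K * f r') :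
    (∫⁻ r in Ioo 0 1, f r) ^ p ≤
      2 * (K : ℝ≥0∞) ^ p * ∫⁻ r in Ioo 0 1, f r ^ p * ENNReal.ofReal ((1 - r) ^ (p - 1)) :=
  calc (∫⁻ r in Ioo 0 1, f r) ^ p = (∑' n, ∫⁻ r in dyadicIco n, f r) ^ p := by
        rw [setLIntegral_Ioo_zero_one_eq_tsum_dyadicIco]
    _ ≤ ∑' n, (∫⁻ r in dyadicIco n, f r) ^ p := ENNReal.rpow_tsum_le_tsum_rpow hp0 hp1 _
    _ ≤ ∑' n, 2 * (K : ℝ≥0∞) ^ p *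
          ∫⁻ r in dyadicIco (n + 1), f r ^ p * ENNReal.ofReal ((1 - r) ^ (p - 1)) :=
        ENNReal.tsum_le_tsum (rpow_setLIntegral_dyadicIco_le hp0 hp1 hf)
    _ ≤ _ := by
        rw [ENNReal.tsum_mul_left]
        gcongr
        exact tsum_setLIntegral_dyadicIco_succ_le _

end

lemma ofReal_kernel_le {G : ℝ → ℝ} (hG : MonotoneOn G (Ico 0 1))
    (hG0 : ∀ r ∈ Ico (0:ℝ) 1, 0 ≤ G r) {β γ ρ : ℝ} (hγ : 0 ≤ γ) (hρ : ρ ∈ Icc (0:ℝ) 1)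
    {r r' : ℝ} (hr : 0 ≤ r) (hrr' : r ≤ r') (hr' : r' < 1) (h4 : 1 - r ≤ 4 * (1 - r')) :
    ENNReal.ofReal (G r * (1 - r) ^ β * (1 - r * ρ) ^ (-γ)) ≤
      ENNReal.ofReal (4 ^ |β|) * ENNReal.ofReal (G r' * (1 - r') ^ β * (1 - r' * ρ) ^ (-γ)) := by
  obtain ⟨hρ0, hρ1⟩ := hρ
  have hG_le : G r ≤ G r' := hG ⟨hr, hrr'.trans_lt hr'⟩ ⟨hr.trans hrr', hr'⟩ hrr'
  have hGr : 0 ≤ G r := hG0 r ⟨hr, hrr'.trans_lt hr'⟩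
  have hu' : 0 < 1 - r' := by linarith
  have hv' : 0 < 1 - r' * ρ := by nlinarith
  have hpow : (1 - r) ^ β ≤ 4 ^ |β| * (1 - r') ^ β :=
    Real.rpow_le_rpow_abs_mul_rpow hu' (by linarith) h4
  have hker : (1 - r * ρ) ^ (-γ) ≤ (1 - r' * ρ) ^ (-γ) :=
    Real.rpow_le_rpow_of_nonpos hv' (by nlinarith) (by linarith)
  rw [← ENNReal.ofReal_mul (by positivity)]
  apply ENNReal.ofReal_le_ofReal
  calc G r * (1 - r) ^ β * (1 - r * ρ) ^ (-γ)
      ≤ G r' * (4 ^ |β| * (1 - r') ^ β) * (1 - r' * ρ) ^ (-γ) := by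
        have hGr' : 0 ≤ G r' := hGr.trans hG_le
        have : 0 ≤ (1 - r) ^ β := Real.rpow_nonneg (by linarith) β
        have : 0 ≤ (1 - r * ρ) ^ (-γ) := Real.rpow_nonneg (by nlinarith) _
        gcongr
    _ = 4 ^ |β| * (G r' * (1 - r') ^ β * (1 - r' * ρ) ^ (-γ)) := by ring

lemma rpow_lintegral_kernel_le {G : ℝ → ℝ} (hG : MonotoneOn G (Ico 0 1))
    (hG0 : ∀ r ∈ Ico (0:ℝ) 1, 0 ≤ G r) {β γ p ρ : ℝ} (hγ : 0 ≤ γ) (hp0 : 0 < p) (hp1 : p ≤ 1)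
    (hρ : ρ ∈ Icc (0:ℝ) 1) :
    (∫⁻ r in Ioo (0:ℝ) 1, ENNReal.ofReal (G r * (1 - r) ^ β * (1 - r * ρ) ^ (-γ))) ^ p ≤
      ENNReal.ofReal (2 * (4 ^ |β|) ^ p) *
        ∫⁻ r in Ioo (0:ℝ) 1,
          ENNReal.ofReal (G r ^ p * (1 - r) ^ (β * p + p - 1) * (1 - r * ρ) ^ (-(γ * p))) := by
  have hC : ENNReal.ofReal (2 * (4 ^ |β|) ^ p) = 2 * ENNReal.ofReal (4 ^ |β|) ^ p := by
    rw [ENNReal.ofReal_mul zero_le_two, ENNReal.ofReal_ofNat,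
      ENNReal.ofReal_rpow_of_nonneg (by positivity) hp0.le]
  rw [hC]
  refine (rpow_setLIntegral_Ioo_zero_one_le (K := (4 ^ |β| : ℝ).toNNReal) hp0 hp1
    fun r r' hr hrr' hr' h4 => ofReal_kernel_le hG hG0 hγ hρ hr hrr' hr' h4).trans_eq ?_
  congr 1
  refine setLIntegral_congr_fun measurableSet_Ioo fun r hr => ?_
  obtain ⟨hr0, hr1⟩ := hr
  have hu : 0 < 1 - r := by linarith
  have hv : 0 < 1 - r * ρ := by nlinarith [hρ.1, hρ.2]
  have hGr : 0 ≤ G r := hG0 r ⟨hr0.le, hr1⟩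
  rw [ENNReal.ofReal_rpow_of_nonneg (by positivity) hp0.le, ← ENNReal.ofReal_mul (by positivity)]
  congr 1
  rw [Real.mul_rpow (by positivity) (by positivity), Real.mul_rpow hGr (by positivity),
    ← Real.rpow_mul hu.le, ← Real.rpow_mul hv.le, show β * p + p - 1 = β * p + (p - 1) by ring,
    Real.rpow_add hu, neg_mul]
  ring

theorem stmt4_general (β s γ p : ℝ) (hγ : 0 < γ)
    (hp0 : 0 < p) (hp1 : p ≤ 1) :
    ∃ C : ℝ, 0 < C ∧ ∀ G : ℝ → ℝ, MonotoneOn G (Ico (0:ℝ) 1) →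
      (∀ r ∈ Ico (0:ℝ) 1, 0 ≤ G r) →
      (∫⁻ ρ in Ioo (0:ℝ) 1,
          (∫⁻ r in Ioo (0:ℝ) 1,
              ENNReal.ofReal (G r * (1 - r) ^ β * (1 - r * ρ) ^ (-γ))) ^ p *
            ENNReal.ofReal ((1 - ρ) ^ s)) ≤
        ENNReal.ofReal C *
          ∫⁻ r in Ioo (0:ℝ) 1, ∫⁻ ρ in Ioo (0:ℝ) 1,
            ENNReal.ofReal
              (G r ^ p * (1 - r) ^ (β * p + p - 1) * (1 - r * ρ) ^ (-(γ * p)) *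
                (1 - ρ) ^ s) := by
  refine ⟨2 * (4 ^ |β|) ^ p, by positivity, fun G hG hG0 => ?_⟩
  have hGm : AEMeasurable G (volume.restrict (Ioo (0:ℝ) 1)) :=
    aemeasurable_restrict_of_monotoneOn measurableSet_Ioo (hG.mono Ioo_subset_Ico_self)
  have hGm_snd := hGm.comp_snd (μ := volume.restrict (Ioo (0:ℝ) 1))
  have hm : AEMeasurable (Function.uncurry fun ρ r => ENNReal.ofReal
      (G r ^ p * (1 - r) ^ (β * p + p - 1) * (1 - r * ρ) ^ (-(γ * p)) * (1 - ρ) ^ s))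
      ((volume.restrict (Ioo (0:ℝ) 1)).prod (volume.restrict (Ioo (0:ℝ) 1))) := by
    fun_prop
  rw [← lintegral_lintegral_swap hm, ← lintegral_const_mul' _ _ ENNReal.ofReal_ne_top]
  refine setLIntegral_mono' measurableSet_Ioo fun ρ hρ => ?_
  calc _ ≤ ENNReal.ofReal (2 * (4 ^ |β|) ^ p) * (∫⁻ r in Ioo (0:ℝ) 1, ENNReal.ofReal
            (G r ^ p * (1 - r) ^ (β * p + p - 1) * (1 - r * ρ) ^ (-(γ * p)))) *
          ENNReal.ofReal ((1 - ρ) ^ s) := by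
        gcongr
        exact rpow_lintegral_kernel_le hG hG0 hγ.le hp0 hp1 (Ioo_subset_Icc_self hρ)
    _ = _ := by
        rw [mul_assoc, ← lintegral_mul_const' _ _ ENNReal.ofReal_ne_top]
        congr 1
        refine setLIntegral_congr_fun measurableSet_Ioo fun r _ => ?_
        rw [← ENNReal.ofReal_mul' (Real.rpow_nonneg (by linarith [hρ.2]) s)]

/-- Lemma 2: for `β > -1`, `s > -1`, `γ > 0`, `0 < p ≤ 1` there is `C`
such that for every nonnegative nondecreasing `G` on `[0,1)`:
`∫₀¹ (∫₀¹ G(r)(1-r)^β (1-rρ)^{-γ} dr)^p (1-ρ)^s dρ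
  ≤ C ∫₀¹∫₀¹ G(r)^p (1-r)^{βp+p-1} (1-rρ)^{-γp} (1-ρ)^s dρ dr`. -/
theorem stmt4 (β s γ p : ℝ) (hβ : -1 < β) (hs : -1 < s) (hγ : 0 < γ)
    (hp0 : 0 < p) (hp1 : p ≤ 1) :
    ∃ C : ℝ, 0 < C ∧ ∀ G : ℝ → ℝ, MonotoneOn G (Ico (0:ℝ) 1) →
      (∀ r ∈ Ico (0:ℝ) 1, 0 ≤ G r) →
      (∫⁻ ρ in Ioo (0:ℝ) 1,
          (∫⁻ r in Ioo (0:ℝ) 1,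
              ENNReal.ofReal (G r * (1 - r) ^ β * (1 - r * ρ) ^ (-γ))) ^ p *
            ENNReal.ofReal ((1 - ρ) ^ s)) ≤
        ENNReal.ofReal C *
          ∫⁻ r in Ioo (0:ℝ) 1, ∫⁻ ρ in Ioo (0:ℝ) 1,
            ENNReal.ofReal
              (G r ^ p * (1 - r) ^ (β * p + p - 1) * (1 - r * ρ) ^ (-(γ * p)) *
                (1 - ρ) ^ s) :=
  stmt4_general β s γ p hγ hp0 hp1
end
end

section
/- Let m > n-1, 0 ≤ r < 1 and y' a point on the unit sphere S in ℝⁿ. Then ∫_S |r x' - y'|^{-m} dx' ≤ C (1-r)^{-(m-n+1)}, where C depends only on m and n. -/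
/-!
On the sphere `1 - r + |x' - y'| ≤ 3 |r x' - y'|`, so it suffices to bound
`∫_S (δ + |x' - y'|)^{-m} dx'` with `δ = 1 - r`. The caps `S ∩ B(y', t)` have measure
`O(t^{n-1})`: near a point the sphere is a Lipschitz graph over the orthogonal hyperplane, and
reflections carry caps to caps. The integrand is at most `(2^k δ)^{-m}` on the part of `S` where
`2^k δ ≤ δ + |x' - y'| < 2^{k+1} δ`, which lies in the cap of radius `2^{k+1} δ`, so the
integral is dominated by the geometric series `δ^{n-1-m} ∑ₖ 2^{k(n-1-m)}`, convergent because
`m > n - 1`.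
-/

open MeasureTheory Metric Set
open scoped ENNReal NNReal

noncomputable section

open scoped InnerProductSpace

lemma abs_sqrt_one_sub_sq_sub_le {a b : ℝ} (ha : |a| ≤ 1 / 2) (hb : |b| ≤ 1 / 2) :
    |√(1 - a ^ 2) - √(1 - b ^ 2)| ≤ |a - b| := by
  set s := √(1 - a ^ 2)
  set t := √(1 - b ^ 2)
  have hs : 1 / 2 ≤ s := Real.le_sqrt_of_sq_le (by nlinarith [sq_abs a, abs_nonneg a])
  have ht : 1 / 2 ≤ t := Real.le_sqrt_of_sq_le (by nlinarith [sq_abs b, abs_nonneg b])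
  have hst : (s - t) * (s + t) = (b - a) * (b + a) := by
    linear_combination Real.sq_sqrt (by nlinarith [sq_abs a, abs_nonneg a] : 0 ≤ 1 - a ^ 2) -
      Real.sq_sqrt (by nlinarith [sq_abs b, abs_nonneg b] : 0 ≤ 1 - b ^ 2)
  refine le_of_mul_le_mul_right ?_ (by linarith : 0 < s + t)
  calc |s - t| * (s + t) = |a - b| * |a + b| := by
        rw [← abs_of_pos (by linarith : 0 < s + t), ← abs_mul, hst, abs_mul, abs_sub_comm,
          add_comm b]
    _ ≤ |a - b| * (s + t) := by gcongr; linarith [abs_add_le a b]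

lemma lipschitzOnWith_add_sqrt_one_sub_sq_smul {F : Type*} [NormedAddCommGroup F]
    [NormedSpace ℝ F] (H : Submodule ℝ F) {e : F} (he : ‖e‖ = 1) :
    LipschitzOnWith 2 (fun u : H ↦ (u : F) + √(1 - ‖u‖ ^ 2) • e) (closedBall 0 (1 / 2)) := by
  refine LipschitzOnWith.of_dist_le_mul fun u hu v hv ↦ ?_
  rw [mem_closedBall_zero_iff, ← abs_norm] at hu hv
  have hsqrt := abs_sqrt_one_sub_sq_sub_le hu hv
  calc dist ((u : F) + √(1 - ‖u‖ ^ 2) • e) ((v : F) + √(1 - ‖v‖ ^ 2) • e)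
      = ‖(u - v : F) + (√(1 - ‖u‖ ^ 2) - √(1 - ‖v‖ ^ 2)) • e‖ := by
        rw [dist_eq_norm, sub_smul]; congr 1; abel
    _ ≤ ‖u - v‖ + |‖u‖ - ‖v‖| := by
        refine (norm_add_le _ _).trans (add_le_add le_rfl ?_)
        rw [norm_smul, he, mul_one, Real.norm_eq_abs]
        exact hsqrt
    _ ≤ (2 : ℝ≥0) * dist u v := by
        rw [dist_eq_norm]; push_cast; linarith [abs_norm_sub_norm_le u v]

section SphereCaps

variable {F : Type*} [NormedAddCommGroup F] [InnerProductSpace ℝ F]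

lemma sphere_inter_closedBall_subset_image {e : F} (he : ‖e‖ = 1) {t : ℝ} (ht : t ≤ 1 / 2) :
    sphere 0 1 ∩ closedBall e t ⊆
      (fun u : (ℝ ∙ e)ᗮ ↦ (u : F) + √(1 - ‖u‖ ^ 2) • e) '' closedBall 0 t := by
  rintro x ⟨hx, hxe⟩
  rw [mem_sphere_zero_iff_norm] at hx
  rw [mem_closedBall, dist_eq_norm] at hxe
  set a := ⟪e, x⟫_ℝ
  have hxe_sq : ‖x - e‖ ^ 2 = 2 - 2 * a := by
    rw [norm_sub_sq_real, hx, he, real_inner_comm]; ring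
  have ha : 0 ≤ a := by nlinarith [norm_nonneg (x - e)]
  have hu : x - a • e ∈ (ℝ ∙ e)ᗮ := by
    rw [Submodule.mem_orthogonal_singleton_iff_inner_right, inner_sub_right,
      real_inner_smul_right, real_inner_self_eq_norm_sq, he]
    ring
  have hu_sq : ‖x - a • e‖ ^ 2 = 1 - a ^ 2 := by
    rw [norm_sub_sq_real, norm_smul, real_inner_smul_right, hx, he, Real.norm_eq_abs,
      abs_of_nonneg ha, real_inner_comm]
    ring
  refine ⟨⟨x - a • e, hu⟩, ?_, ?_⟩
  · rw [mem_closedBall_zero_iff]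
    show ‖x - a • e‖ ≤ t
    exact (abs_le_of_sq_le_sq' (by nlinarith [norm_nonneg (x - e)])
      (by linarith [norm_nonneg (x - e)])).2
  · show x - a • e + √(1 - ‖x - a • e‖ ^ 2) • e = x
    rw [hu_sq, sub_sub_cancel, Real.sqrt_sq ha, sub_add_cancel]

variable [MeasurableSpace F] [BorelSpace F]

lemma hausdorffMeasure_sphere_inter_closedBall_congr {y z : F} (h : ‖y‖ = ‖z‖)
    (s ρ t : ℝ) :
    μH[s] (sphere 0 ρ ∩ closedBall y t) = μH[s] (sphere 0 ρ ∩ closedBall z t) := by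
  set R := (ℝ ∙ (y - z))ᗮ.reflection
  have hR : R '' (sphere 0 ρ ∩ closedBall y t) = sphere 0 ρ ∩ closedBall z t := by
    rw [image_inter R.injective, R.image_sphere, R.image_closedBall]
    simp [R, Submodule.reflection_sub h]
  rw [← hR, R.isometry.hausdorffMeasure_image (Or.inr R.surjective)]

variable [FiniteDimensional ℝ F] {d : ℕ}

lemma exists_hausdorffMeasure_sphere_inter_closedBall_le_of_le_half
    (hd : Module.finrank ℝ F = d + 1) :
    ∃ A : ℝ≥0∞, A ≠ ∞ ∧ ∀ y ∈ sphere (0 : F) 1, ∀ t, 0 ≤ t → t ≤ 1 / 2 →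
      μH[d] (sphere 0 1 ∩ closedBall y t) ≤ A * ENNReal.ofReal (t ^ d) := by
  have : Nontrivial F := Module.nontrivial_of_finrank_eq_succ hd
  have : Fact (Module.finrank ℝ F = d + 1) := ⟨hd⟩
  obtain ⟨e, he⟩ := exists_norm_eq F zero_le_one
  set H := (ℝ ∙ e)ᗮ
  have hH : Module.finrank ℝ H = d :=
    Submodule.finrank_orthogonal_span_singleton (by rintro rfl; simp at he)
  have : (μH[d] : Measure H).IsAddHaarMeasure := hH ▸ isAddHaarMeasure_hausdorffMeasure
  refine ⟨2 ^ (d : ℝ) * μH[d] (ball (0 : H) 1),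
    ENNReal.mul_ne_top (by simp) measure_ball_lt_top.ne, fun y hy t ht0 ht ↦ ?_⟩
  rw [hausdorffMeasure_sphere_inter_closedBall_congr (by rw [he, mem_sphere_zero_iff_norm.1 hy])]
  calc μH[d] (sphere 0 1 ∩ closedBall e t)
      ≤ μH[d] ((fun u : H ↦ (u : F) + √(1 - ‖u‖ ^ 2) • e) '' closedBall 0 t) :=
        measure_mono (sphere_inter_closedBall_subset_image he ht)
    _ ≤ (2 : ℝ≥0) ^ (d : ℝ) * μH[d] (closedBall (0 : H) t) :=
        ((lipschitzOnWith_add_sqrt_one_sub_sq_smul H he).mono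
          (closedBall_subset_closedBall ht)).hausdorffMeasure_image_le d.cast_nonneg
    _ = 2 ^ (d : ℝ) * μH[d] (ball (0 : H) 1) * ENNReal.ofReal (t ^ d) := by
        rw [Measure.addHaar_closedBall _ _ ht0, hH]; push_cast; ring

lemma hausdorffMeasure_sphere_lt_top (hd : Module.finrank ℝ F = d + 1) :
    μH[d] (sphere (0 : F) 1) < ∞ := by
  obtain ⟨A, hA, hcap⟩ := exists_hausdorffMeasure_sphere_inter_closedBall_le_of_le_half hd
  obtain ⟨c, hcS, hc, hcover⟩ :=
    finite_cover_balls_of_compact (isCompact_sphere (0 : F) 1) (by norm_num : (0 : ℝ) < 1 / 2)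
  calc μH[d] (sphere (0 : F) 1) ≤ μH[d] (⋃ y ∈ c, sphere 0 1 ∩ closedBall y (1 / 2)) := by
        refine measure_mono fun x hx ↦ ?_
        obtain ⟨y, hy, hxy⟩ := mem_iUnion₂.1 (hcover hx)
        exact mem_iUnion₂.2 ⟨y, hy, hx, ball_subset_closedBall hxy⟩
    _ < ∞ := measure_biUnion_lt_top hc fun y hy ↦
        (hcap y (hcS hy) _ (by norm_num) le_rfl).trans_lt
          (ENNReal.mul_lt_top hA.lt_top ENNReal.ofReal_lt_top)

lemma exists_hausdorffMeasure_sphere_inter_closedBall_le (hd : Module.finrank ℝ F = d + 1) :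
    ∃ A : ℝ≥0∞, A ≠ ∞ ∧ ∀ y ∈ sphere (0 : F) 1, ∀ t, 0 ≤ t →
      μH[d] (sphere 0 1 ∩ closedBall y t) ≤ A * ENNReal.ofReal (t ^ d) := by
  obtain ⟨A, hA, hcap⟩ := exists_hausdorffMeasure_sphere_inter_closedBall_le_of_le_half hd
  set V := μH[d] (sphere (0 : F) 1)
  refine ⟨A + 2 ^ d * V, by finiteness [(hausdorffMeasure_sphere_lt_top hd).ne],
    fun y hy t ht0 ↦ ?_⟩
  rcases le_or_gt t (1 / 2) with ht | ht
  · exact (hcap y hy t ht0 ht).trans (by gcongr; exact le_self_add)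
  · have h1 : 1 ≤ (2 : ℝ≥0∞) ^ d * ENNReal.ofReal (t ^ d) := by
      rw [← ENNReal.ofReal_ofNat, ← ENNReal.ofReal_pow zero_le_two,
        ← ENNReal.ofReal_mul (by positivity), ← mul_pow, ← ENNReal.ofReal_one]
      exact ENNReal.ofReal_le_ofReal (one_le_pow₀ (by linarith))
    calc μH[d] (sphere 0 1 ∩ closedBall y t) ≤ V := measure_mono inter_subset_left
      _ ≤ 2 ^ d * V * ENNReal.ofReal (t ^ d) := by
        rw [mul_right_comm]; exact le_mul_of_one_le_left' h1
      _ ≤ (A + 2 ^ d * V) * ENNReal.ofReal (t ^ d) := by gcongr; exact le_add_self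

end SphereCaps

lemma rpow_neg_mul_rpow_two_pow_succ {δ : ℝ} (hδ : 0 < δ) (d m : ℝ) (k : ℕ) :
    (2 ^ k * δ) ^ (-m) * (2 ^ (k + 1) * δ) ^ d = 2 ^ d * δ ^ (d - m) * (2 ^ (d - m)) ^ k := by
  have hk : 0 < 2 ^ k * δ := by positivity
  rw [pow_succ, mul_right_comm, mul_comm _ (2 : ℝ), Real.mul_rpow zero_le_two hk.le,
    mul_left_comm, ← Real.rpow_add hk, neg_add_eq_sub, Real.mul_rpow (by positivity) hδ.le,
    Real.rpow_pow_comm zero_le_two]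
  ring

section DistancePotential

variable {X : Type*} [PseudoMetricSpace X]

lemma ofReal_add_dist_rpow_neg_le_tsum {δ m : ℝ} (hδ : 0 < δ) (hm : 0 ≤ m) (x y : X) :
    ENNReal.ofReal ((δ + dist x y) ^ (-m)) ≤ ∑' k : ℕ, (closedBall y (2 ^ (k + 1) * δ)).indicator
      (fun _ ↦ ENNReal.ofReal ((2 ^ k * δ) ^ (-m))) x := by
  have hρ : 1 ≤ (δ + dist x y) / δ := (one_le_div hδ).2 (le_add_of_nonneg_right dist_nonneg)
  obtain ⟨k, hk, hk'⟩ := exists_nat_pow_near hρ one_lt_two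
  rw [le_div_iff₀ hδ] at hk
  rw [div_lt_iff₀ hδ] at hk'
  refine le_trans ?_ (ENNReal.le_tsum k)
  rw [indicator_of_mem (mem_closedBall.2 (by linarith))]
  exact ENNReal.ofReal_le_ofReal
    (Real.rpow_le_rpow_of_nonpos (by positivity) hk (neg_nonpos.2 hm))

variable [MeasurableSpace X] [OpensMeasurableSpace X]

theorem exists_lintegral_add_dist_rpow_neg_le (μ : Measure X) {A : ℝ≥0∞} (hA : A ≠ ∞)
    {d m : ℝ} (hm : 0 ≤ m) (hdm : d < m) :
    ∃ K : ℝ≥0∞, K ≠ ∞ ∧ ∀ y : X,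
      (∀ t, 0 ≤ t → μ (closedBall y t) ≤ A * ENNReal.ofReal (t ^ d)) → ∀ δ, 0 < δ →
        ∫⁻ x, ENNReal.ofReal ((δ + dist x y) ^ (-m)) ∂μ ≤ K * ENNReal.ofReal (δ ^ (d - m)) := by
  set q := ENNReal.ofReal (2 ^ (d - m))
  have hq : q < 1 := ENNReal.ofReal_lt_one.2
    (Real.rpow_lt_one_of_one_lt_of_neg one_lt_two (by linarith))
  refine ⟨A * ENNReal.ofReal (2 ^ d) * (1 - q)⁻¹,
    by finiteness [ENNReal.inv_ne_top.2 (tsub_pos_of_lt hq).ne'], fun y hμ δ hδ ↦ ?_⟩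
  calc ∫⁻ x, ENNReal.ofReal ((δ + dist x y) ^ (-m)) ∂μ
      ≤ ∫⁻ x, ∑' k : ℕ, (closedBall y (2 ^ (k + 1) * δ)).indicator
          (fun _ ↦ ENNReal.ofReal ((2 ^ k * δ) ^ (-m))) x ∂μ :=
        lintegral_mono fun x ↦ ofReal_add_dist_rpow_neg_le_tsum hδ hm x y
    _ = ∑' k : ℕ, ENNReal.ofReal ((2 ^ k * δ) ^ (-m)) * μ (closedBall y (2 ^ (k + 1) * δ)) := by
        rw [lintegral_tsum fun k ↦
          (measurable_const.indicator measurableSet_closedBall).aemeasurable]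
        simp only [lintegral_indicator_const measurableSet_closedBall]
    _ ≤ ∑' k : ℕ, ENNReal.ofReal ((2 ^ k * δ) ^ (-m)) *
          (A * ENNReal.ofReal ((2 ^ (k + 1) * δ) ^ d)) :=
        ENNReal.tsum_le_tsum fun k ↦ by gcongr; exact hμ _ (by positivity)
    _ = ∑' k : ℕ, A * ENNReal.ofReal (2 ^ d) * ENNReal.ofReal (δ ^ (d - m)) * q ^ k := by
        congr 1 with k
        rw [mul_left_comm, ← ENNReal.ofReal_mul (by positivity),
          rpow_neg_mul_rpow_two_pow_succ hδ, ENNReal.ofReal_mul (by positivity),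
          ENNReal.ofReal_mul (by positivity),
          ENNReal.ofReal_pow (by positivity)]
        ring
    _ = A * ENNReal.ofReal (2 ^ d) * (1 - q)⁻¹ * ENNReal.ofReal (δ ^ (d - m)) := by
        rw [ENNReal.tsum_mul_left, ENNReal.tsum_geometric]; ring

end DistancePotential

lemma norm_smul_sub_rpow_neg_le {F : Type*} [SeminormedAddCommGroup F] [NormedSpace ℝ F]
    {x y : F} (hx : ‖x‖ = 1) (hy : ‖y‖ = 1) {r m : ℝ} (hr0 : 0 ≤ r) (hr1 : r < 1)
    (hm : 0 ≤ m) :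
    ‖r • x - y‖ ^ (-m) ≤ 3 ^ m * (1 - r + ‖x - y‖) ^ (-m) := by
  have hrx : ‖r • x‖ = r := by rw [norm_smul, hx, mul_one, Real.norm_of_nonneg hr0]
  have h1 : 1 - r ≤ ‖r • x - y‖ := by
    simpa only [hy, hrx, norm_sub_rev y] using norm_sub_norm_le y (r • x)
  have h2 : ‖x - y‖ ≤ ‖r • x - y‖ + (1 - r) := by
    calc ‖x - y‖ = ‖(r • x - y) + (1 - r) • x‖ := by congr 1; module
      _ ≤ ‖r • x - y‖ + (1 - r) := by
        refine (norm_add_le _ _).trans_eq ?_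
        rw [norm_smul, hx, mul_one, Real.norm_of_nonneg (by linarith)]
  have hpos : 0 < 1 - r + ‖x - y‖ := by linarith [norm_nonneg (x - y)]
  calc ‖r • x - y‖ ^ (-m) ≤ ((1 - r + ‖x - y‖) / 3) ^ (-m) :=
        Real.rpow_le_rpow_of_nonpos (by positivity) (by linarith) (neg_nonpos.2 hm)
    _ = 3 ^ m * (1 - r + ‖x - y‖) ^ (-m) := by
        rw [Real.div_rpow hpos.le zero_le_three, Real.rpow_neg zero_le_three, div_inv_eq_mul,
          mul_comm]

lemma exists_sphMeasure_closedBall_le {n : ℕ} (hn : 1 ≤ n) :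
    ∃ A : ℝ≥0∞, A ≠ ∞ ∧ ∀ y ∈ sphere (0 : E n) 1, ∀ t, 0 ≤ t →
      sphMeasure n (closedBall y t) ≤ A * ENNReal.ofReal (t ^ ((n : ℝ) - 1)) := by
  have hd : Module.finrank ℝ (E n) = (n - 1) + 1 := by rw [finrank_euclideanSpace_fin]; omega
  have hdim : ((n - 1 : ℕ) : ℝ) = (n : ℝ) - 1 := by rw [Nat.cast_sub hn, Nat.cast_one]
  obtain ⟨A, hA, hcap⟩ := exists_hausdorffMeasure_sphere_inter_closedBall_le hd
  set V := μH[(n : ℝ) - 1] (sphere (0 : E n) 1)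
  by_cases hV : V = 0
  · have hσ : sphMeasure n = 0 := by rw [sphMeasure, Measure.restrict_eq_zero.2 hV, smul_zero]
    exact ⟨0, ENNReal.zero_ne_top, fun y _ t _ ↦ by simp [hσ]⟩
  refine ⟨V⁻¹ * A, by finiteness [ENNReal.inv_ne_top.2 hV], fun y hy t ht ↦ ?_⟩
  have hcap_y := hcap y hy t ht
  rw [← Real.rpow_natCast, hdim] at hcap_y
  rw [sphMeasure, Measure.smul_apply, Measure.restrict_apply measurableSet_closedBall, smul_eq_mul,
    inter_comm, mul_assoc]
  gcongr

lemma exists_lintegral_sphMeasure_rpow_neg_le {n : ℕ} (hn : 1 ≤ n) {m : ℝ}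
    (hm : (n : ℝ) - 1 < m) :
    ∃ K : ℝ≥0∞, K ≠ ∞ ∧ ∀ r ∈ Ico (0 : ℝ) 1, ∀ y ∈ sphere (0 : E n) 1,
      ∫⁻ x, ENNReal.ofReal (‖r • x - y‖ ^ (-m)) ∂sphMeasure n ≤
        K * ENNReal.ofReal ((1 - r) ^ ((n : ℝ) - 1 - m)) := by
  have hm0 : 0 ≤ m := by linarith [show (1 : ℝ) ≤ n by exact_mod_cast hn]
  obtain ⟨A, hA, hball⟩ := exists_sphMeasure_closedBall_le hn
  obtain ⟨K, hK, hpot⟩ := exists_lintegral_add_dist_rpow_neg_le (sphMeasure n) hA hm0 hm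
  refine ⟨ENNReal.ofReal (3 ^ m) * K, by finiteness, fun r ⟨hr0, hr1⟩ y hy ↦ ?_⟩
  have hS : ∀ᵐ x ∂sphMeasure n, x ∈ sphere (0 : E n) 1 :=
    Measure.ae_smul_measure (ae_restrict_mem isClosed_sphere.measurableSet) _
  calc ∫⁻ x, ENNReal.ofReal (‖r • x - y‖ ^ (-m)) ∂sphMeasure n
      ≤ ∫⁻ x, ENNReal.ofReal (3 ^ m) * ENNReal.ofReal ((1 - r + dist x y) ^ (-m))
          ∂sphMeasure n := by
        refine lintegral_mono_ae (hS.mono fun x hx ↦ ?_)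
        rw [← ENNReal.ofReal_mul (by positivity), dist_eq_norm]
        exact ENNReal.ofReal_le_ofReal <| norm_smul_sub_rpow_neg_le
          (mem_sphere_zero_iff_norm.1 hx) (mem_sphere_zero_iff_norm.1 hy) hr0 hr1 hm0
    _ ≤ _ := by
        rw [lintegral_const_mul' _ _ ENNReal.ofReal_ne_top, mul_assoc]
        gcongr
        exact hpot y (hball y hy) _ (sub_pos.2 hr1)

/-- for `m > n-1` there is `C = C(m,n)` such that for all `0 ≤ r < 1`
and `y'` on the unit sphere, `∫_S |r x' - y'|^{-m} dx' ≤ C (1-r)^{-(m-n+1)}`. -/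
theorem stmt5 (n : ℕ) (hn : 2 ≤ n) (m : ℝ) (hm : (n : ℝ) - 1 < m) :
    ∃ C : ℝ, 0 < C ∧ ∀ r ∈ Ico (0:ℝ) 1, ∀ y' ∈ sphere (0 : E n) 1,
      (∫ x', ‖r • x' - y'‖ ^ (-m) ∂(sphMeasure n)) ≤ C * (1 - r) ^ (-(m - n + 1)) := by
  obtain ⟨K, hK, hlint⟩ := exists_lintegral_sphMeasure_rpow_neg_le (by omega : 1 ≤ n) hm
  refine ⟨K.toReal + 1, by positivity, fun r hr y hy ↦ ?_⟩
  have hpow : 0 ≤ (1 - r) ^ (-(m - n + 1)) := Real.rpow_nonneg (sub_nonneg.2 hr.2.le) _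
  calc ∫ x, ‖r • x - y‖ ^ (-m) ∂sphMeasure n
      = (∫⁻ x, ENNReal.ofReal (‖r • x - y‖ ^ (-m)) ∂sphMeasure n).toReal :=
        integral_eq_lintegral_of_nonneg_ae (ae_of_all _ fun x ↦ by positivity)
          (by fun_prop : Measurable fun x : E n ↦ ‖r • x - y‖ ^ (-m)).aestronglyMeasurable
    _ ≤ K.toReal * (1 - r) ^ (-(m - n + 1)) := by
        refine (ENNReal.toReal_mono (by finiteness) (hlint r hr y hy)).trans_eq ?_
        rw [ENNReal.toReal_mul, show (n : ℝ) - 1 - m = -(m - n + 1) by ring,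
          ENNReal.toReal_ofReal hpow]
    _ ≤ (K.toReal + 1) * (1 - r) ^ (-(m - n + 1)) := by gcongr; linarith
end
end

section
/- Let α > 0 and 1 ≤ p < ∞. For f ∈ A^∞_α define t̃₂(f) = inf{ε > 0 : ∫₀¹ χ_{L̂_{ε,α}(f)}(r)(1-r)^{-1}dr < ∞} with L̂_{ε,α}(f) = {r ∈ [0,1) : M_∞(f,r)(1-r)^α ≥ ε}. Then t̃₂(f) ≤ dist_{A^∞_α}(f, B^{p,∞}_α). -/
/-!
If `|f - g| (1 - |x|)^α ≤ d` with `g ∈ B^{p,∞}_α`, then for every `η > 0` the set where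
`M_∞(f,r)(1-r)^α ≥ d + η` lies inside the set where `M_∞(g,r)(1-r)^α ≥ η`. Raising the latter
inequality to the power `p` gives `(1-r)⁻¹ ≤ η^{-p} M_∞(g,r)^p (1-r)^{αp-1}`, whose integral is
finite, so `d + η` is admissible in the infimum defining `t̃₂(f)`. The comparison function
`g = 0` shows that the right-hand infimum is taken over a nonempty set.
-/

open MeasureTheory Metric Set
open scoped ENNReal NNReal

noncomputable section

section Minf

variable {n : ℕ}

lemma Minf_nonneg (g : E n → ℝ) (r : ℝ) : 0 ≤ Minf n g r :=
  Real.iSup_nonneg fun _ => abs_nonneg _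

lemma norm_smul_of_mem_sphere {r : ℝ} (x' : sphere (0 : E n) 1) : ‖r • (x' : E n)‖ = |r| := by
  rw [norm_smul, norm_eq_of_mem_sphere x', mul_one, Real.norm_eq_abs]

lemma continuous_abs_comp_smul_sphere {g : E n → ℝ} (hg : ContinuousOn g (ball 0 1)) :
    Continuous fun q : Ioo (-1 : ℝ) 1 × sphere (0 : E n) 1 => |g ((q.1 : ℝ) • (q.2 : E n))| := by
  refine (hg.comp_continuous (by fun_prop) fun q => ?_).abs
  rw [mem_ball_zero_iff, norm_smul_of_mem_sphere]
  exact abs_lt.mpr q.1.2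

lemma bddAbove_range_abs_comp_smul_sphere {g : E n → ℝ} (hg : ContinuousOn g (ball 0 1))
    {r : ℝ} (hr : r ∈ Ioo (-1 : ℝ) 1) :
    BddAbove (range fun x' : sphere (0 : E n) 1 => |g (r • (x' : E n))|) :=
  (isCompact_range ((continuous_abs_comp_smul_sphere hg).comp
    (Continuous.prodMk_right (⟨r, hr⟩ : Ioo (-1 : ℝ) 1)))).bddAbove

lemma continuousOn_Minf {g : E n → ℝ} (hg : ContinuousOn g (ball 0 1)) :
    ContinuousOn (Minf n g) (Ioo (-1) 1) := by
  rw [continuousOn_iff_continuous_domRestrict]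
  have := isCompact_univ.continuous_sSup
    (f := fun (r : Ioo (-1 : ℝ) 1) (x' : sphere (0 : E n) 1) => |g ((r : ℝ) • (x' : E n))|)
    (continuous_abs_comp_smul_sphere hg)
  simp only [image_univ] at this
  exact this

lemma Minf_mul_le_Minf_mul_add {f g : E n → ℝ} (hg : ContinuousOn g (ball 0 1))
    {α d r : ℝ} (hd : 0 ≤ d) (hr : r ∈ Ico (0 : ℝ) 1)
    (hfg : ∀ x ∈ ball (0 : E n) 1, |f x - g x| * (1 - ‖x‖) ^ α ≤ d) :
    Minf n f r * (1 - r) ^ α ≤ Minf n g r * (1 - r) ^ α + d := by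
  have hw : 0 ≤ (1 - r) ^ α := Real.rpow_nonneg (by linarith [hr.2]) α
  rw [Minf, Real.iSup_mul_of_nonneg hw]
  refine Real.iSup_le (fun x' => ?_) (add_nonneg (mul_nonneg (Minf_nonneg g r) hw) hd)
  have hnorm : ‖r • (x' : E n)‖ = r := by rw [norm_smul_of_mem_sphere, abs_of_nonneg hr.1]
  have hdist := hfg _ (mem_ball_zero_iff.mpr (hnorm.trans_lt hr.2))
  have hg_le : |g (r • (x' : E n))| ≤ Minf n g r :=
    le_ciSup (bddAbove_range_abs_comp_smul_sphere hg ⟨by linarith [hr.1], hr.2⟩) x'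
  rw [hnorm] at hdist
  nlinarith [abs_sub_abs_le_abs_sub (f (r • (x' : E n))) (g (r • (x' : E n)))]

end Minf

lemma inv_le_rpow_neg_mul_of_le_mul_rpow {η m t α p : ℝ} (hη : 0 < η) (ht : 0 < t) (hp : 0 ≤ p)
    (h : η ≤ m * t ^ α) : t⁻¹ ≤ η ^ (-p) * (m ^ p * t ^ (α * p - 1)) := by
  have hm : 0 ≤ m := nonneg_of_mul_nonneg_left (hη.le.trans h) (Real.rpow_pos_of_pos ht α)
  have hpow : η ^ p ≤ m ^ p * t ^ (α * p) := by
    calc η ^ p ≤ (m * t ^ α) ^ p := Real.rpow_le_rpow hη.le h hp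
      _ = m ^ p * t ^ (α * p) := by
        rw [Real.mul_rpow hm (Real.rpow_nonneg ht.le α), ← Real.rpow_mul ht.le]
  have hηp : 0 < η ^ p := Real.rpow_pos_of_pos hη p
  rw [Real.rpow_neg hη.le, Real.rpow_sub_one ht.ne']
  calc t⁻¹ = (η ^ p)⁻¹ * η ^ p * t⁻¹ := by rw [inv_mul_cancel₀ hηp.ne', one_mul]
    _ ≤ (η ^ p)⁻¹ * (m ^ p * t ^ (α * p)) * t⁻¹ := by gcongr
    _ = (η ^ p)⁻¹ * (m ^ p * (t ^ (α * p) / t)) := by ring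

lemma setLIntegral_lt_top_of_le_const_mul {α : Type*} [MeasurableSpace α] {μ : Measure α}
    {s u : Set α} {F G : α → ℝ≥0∞} {c : ℝ≥0∞} (hsu : s ⊆ u) (hG : AEMeasurable G (μ.restrict u))
    (hc : c ≠ ⊤) (hFG : ∀ x ∈ s, F x ≤ c * G x) (hGu : ∫⁻ x in u, G x ∂μ < ⊤) :
    ∫⁻ x in s, F x ∂μ < ⊤ :=
  calc ∫⁻ x in s, F x ∂μ ≤ ∫⁻ x in s, c * G x ∂μ :=
        setLIntegral_mono_ae ((hG.mono_set hsu).const_mul c) (ae_of_all _ hFG)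
    _ ≤ ∫⁻ x in u, c * G x ∂μ := lintegral_mono_set hsu
    _ = c * ∫⁻ x in u, G x ∂μ := lintegral_const_mul'' c hG
    _ < ⊤ := ENNReal.mul_lt_top hc.lt_top hGu

lemma setLIntegral_inv_one_sub_lt_top {n : ℕ} {α p d η : ℝ} (hp : 0 ≤ p) (hd : 0 ≤ d)
    (hη : 0 < η) {f g : E n → ℝ} (hg : ContinuousOn g (ball 0 1))
    (hgB : ∫⁻ r in Ioo (0:ℝ) 1, ENNReal.ofReal (Minf n g r ^ p * (1 - r) ^ (α * p - 1)) < ⊤)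
    (hfg : ∀ x ∈ ball (0 : E n) 1, |f x - g x| * (1 - ‖x‖) ^ α ≤ d) :
    (∫⁻ r in {r : ℝ | r ∈ Ico (0:ℝ) 1 ∧ d + η ≤ Minf n f r * (1 - r) ^ α},
      ENNReal.ofReal ((1 - r)⁻¹)) < ⊤ := by
  have hM : AEMeasurable (Minf n g) (volume.restrict (Ico 0 1)) :=
    ((continuousOn_Minf hg).mono (Ico_subset_Ioo_left (by norm_num))).aemeasurable
      measurableSet_Ico
  refine setLIntegral_lt_top_of_le_const_mul
    (G := fun r => ENNReal.ofReal (Minf n g r ^ p * (1 - r) ^ (α * p - 1))) (fun r hr => hr.1)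
    (by fun_prop) (ENNReal.ofReal_ne_top (r := η ^ (-p))) ?_
    (by rwa [← setLIntegral_congr Ioo_ae_eq_Ico])
  rintro r ⟨hr, hle⟩
  rw [← ENNReal.ofReal_mul (Real.rpow_nonneg hη.le _)]
  exact ENNReal.ofReal_le_ofReal (inv_le_rpow_neg_mul_of_le_mul_rpow hη (sub_pos.2 hr.2) hp
    (by linarith [Minf_mul_le_Minf_mul_add hg hd hr hfg]))

lemma harmonicOnBall_zero {n : ℕ} : HarmonicOnBall (0 : E n → ℝ) :=
  ⟨contDiffOn_const, fun x _ => by simp [lap]⟩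

lemma Minf_zero {n : ℕ} (r : ℝ) : Minf n 0 r = 0 := by
  simp [Minf]

theorem stmt11_general (n : ℕ) (α p : ℝ) (hp : 1 ≤ p)
    (f : E n → ℝ)
    (hfA : ∃ C : ℝ, ∀ x ∈ ball (0 : E n) 1, |f x| * (1 - ‖x‖) ^ α ≤ C) :
    sInf {ε : ℝ | 0 < ε ∧
        (∫⁻ r in {r : ℝ | r ∈ Ico (0:ℝ) 1 ∧ ε ≤ Minf n f r * (1 - r) ^ α},
          ENNReal.ofReal ((1 - r)⁻¹)) < ⊤} ≤
      sInf {d : ℝ | 0 ≤ d ∧ ∃ g : E n → ℝ, HarmonicOnBall g ∧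
        (∫⁻ r in Ioo (0:ℝ) 1,
          ENNReal.ofReal (Minf n g r ^ p * (1 - r) ^ (α * p - 1))) < ⊤ ∧
        ∀ x ∈ ball (0 : E n) 1, |f x - g x| * (1 - ‖x‖) ^ α ≤ d} := by
  obtain ⟨C, hC⟩ := hfA
  have hdist_zero : max C 0 ∈ {d : ℝ | 0 ≤ d ∧ ∃ g : E n → ℝ, HarmonicOnBall g ∧
      (∫⁻ r in Ioo (0:ℝ) 1,
        ENNReal.ofReal (Minf n g r ^ p * (1 - r) ^ (α * p - 1))) < ⊤ ∧
      ∀ x ∈ ball (0 : E n) 1, |f x - g x| * (1 - ‖x‖) ^ α ≤ d} :=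
    ⟨le_max_right C 0, 0, harmonicOnBall_zero,
      by simp [Minf_zero, Real.zero_rpow (by linarith : p ≠ 0)],
      fun x hx => by simpa using (hC x hx).trans (le_max_left C 0)⟩
  refine le_csInf ⟨max C 0, hdist_zero⟩ fun d ⟨hd, g, hg, hgB, hfg⟩ => ?_
  refine le_of_forall_pos_le_add fun η hη => csInf_le ⟨0, fun ε hε => hε.1.le⟩ ?_
  exact ⟨by linarith, setLIntegral_inv_one_sub_lt_top (by linarith) hd hη hg.1.continuousOn hgB hfg⟩

/-- half of Theorem 5: for `f ∈ A^∞_α`, `1 ≤ p < ∞`,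
`t̃₂(f) ≤ dist_{A^∞_α}(f, B^{p,∞}_α)`. -/
theorem stmt11 (n : ℕ) (hn : 2 ≤ n) (α p : ℝ) (hα : 0 < α) (hp : 1 ≤ p)
    (f : E n → ℝ) (hf : HarmonicOnBall f)
    (hfA : ∃ C : ℝ, ∀ x ∈ ball (0 : E n) 1, |f x| * (1 - ‖x‖) ^ α ≤ C) :
    sInf {ε : ℝ | 0 < ε ∧
        (∫⁻ r in {r : ℝ | r ∈ Ico (0:ℝ) 1 ∧ ε ≤ Minf n f r * (1 - r) ^ α},
          ENNReal.ofReal ((1 - r)⁻¹)) < ⊤} ≤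
      sInf {d : ℝ | 0 ≤ d ∧ ∃ g : E n → ℝ, HarmonicOnBall g ∧
        (∫⁻ r in Ioo (0:ℝ) 1,
          ENNReal.ofReal (Minf n g r ^ p * (1 - r) ^ (α * p - 1))) < ⊤ ∧
        ∀ x ∈ ball (0 : E n) 1, |f x - g x| * (1 - ‖x‖) ^ α ≤ d} :=
  stmt11_general n α p hp f hfA
end
end

section
/- Let α > 0 and let L̂ ⊂ [0,1) be a measurable set with ∫_{L̂} (1-ρ)^{-1} dρ < ∞. Define ψ(r) = (1-r)^α ∫_{L̂} (1-rρ)^{-(1+α)} dρ. Then ψ ∈ L^1([0,1), (1-r)^{-1}dr) and ψ ∈ L^∞([0,1)), hence ψ ∈ L^p([0,1), (1-r)^{-1}dr) for all 1 ≤ p < ∞. -/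
open MeasureTheory Metric Set
open scoped ENNReal NNReal

noncomputable section

/-!
Tonelli turns the weighted `L¹` norm of `ψ` into `∫_L̂ ∫₀¹ (1-r)^(α-1) (1-rρ)^(-(1+α)) dr dρ`, and
the inner integral is exactly `1 / (α (1-ρ))`, since `r ↦ -((1-r)/(1-rρ))^α / (α (1-ρ))` is a
primitive. Pointwise, `(1-r)^α (1-ρ) ≤ (1-rρ)^(1+α)` bounds `ψ` by `∫_L̂ (1-ρ)⁻¹`, and the `L^p`
bounds follow from `ψ^p ≤ ‖ψ‖_∞^(p-1) ψ`.
-/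

lemma one_sub_mul_pos {r ρ : ℝ} (hr0 : 0 ≤ r) (hr1 : r ≤ 1) (hρ : ρ < 1) : 0 < 1 - r * ρ := by
  rcases le_or_gt ρ 0 with h | h <;> nlinarith

lemma hasDerivAt_one_sub_rpow_mul_one_sub_mul_rpow {α ρ r : ℝ} (hα : α ≠ 0) (hρ : ρ ≠ 1)
    (hr : r < 1) (hrρ : 0 < 1 - r * ρ) :
    HasDerivAt (fun r => -(α * (1 - ρ))⁻¹ * ((1 - r) ^ α * (1 - r * ρ) ^ (-α)))
      ((1 - r) ^ (α - 1) * (1 - r * ρ) ^ (-(1 + α))) r := by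
  have h1r : 0 < 1 - r := by linarith
  have hA : HasDerivAt (fun r : ℝ => (1 - r) ^ α) (-1 * α * (1 - r) ^ (α - 1)) r :=
    ((hasDerivAt_id' r).const_sub 1).rpow_const (Or.inl h1r.ne')
  have hB : HasDerivAt (fun r : ℝ => (1 - r * ρ) ^ (-α)) (-ρ * -α * (1 - r * ρ) ^ (-α - 1)) r :=
    ((hasDerivAt_mul_const ρ).const_sub 1).rpow_const (Or.inl hrρ.ne')
  refine ((hA.mul hB).const_mul _).congr_deriv ?_
  rw [show -(1 + α) = -α - 1 by ring, Real.rpow_sub_one h1r.ne', Real.rpow_sub_one hrρ.ne']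
  have : 1 - ρ ≠ 0 := sub_ne_zero.2 hρ.symm
  -- `field_simp` normalizes `1 - r * ρ` to `1 - ρ * r`
  have : 1 - ρ * r ≠ 0 := by rw [mul_comm]; exact hrρ.ne'
  field_simp
  ring

lemma lintegral_one_sub_rpow_mul_one_sub_mul_rpow {α ρ : ℝ} (hα : 0 < α) (hρ : ρ < 1) :
    ∫⁻ r in Ioo 0 1, ENNReal.ofReal ((1 - r) ^ (α - 1) * (1 - r * ρ) ^ (-(1 + α))) =
      ENNReal.ofReal (α * (1 - ρ))⁻¹ := by
  set F : ℝ → ℝ := fun r => -(α * (1 - ρ))⁻¹ * ((1 - r) ^ α * (1 - r * ρ) ^ (-α))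
  set f : ℝ → ℝ := fun r => (1 - r) ^ (α - 1) * (1 - r * ρ) ^ (-(1 + α))
  have hpos : ∀ r ∈ Icc (0 : ℝ) 1, 0 < 1 - r * ρ := fun r hr => one_sub_mul_pos hr.1 hr.2 hρ
  have hF : ContinuousOn F (Icc 0 1) := by
    refine continuousOn_const.mul (ContinuousOn.mul ?_ ?_)
    · exact (continuousOn_const.sub continuousOn_id).rpow_const fun _ _ => Or.inr hα.le
    · exact (continuousOn_const.sub (continuousOn_id.mul continuousOn_const)).rpow_const
        fun r hr => Or.inl (hpos r hr).ne'
  have hderiv : ∀ r ∈ Ioo (0 : ℝ) 1, HasDerivAt F (f r) r := fun r hr =>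
    hasDerivAt_one_sub_rpow_mul_one_sub_mul_rpow hα.ne' hρ.ne hr.2 (hpos r (Ioo_subset_Icc_self hr))
  have hf_nonneg : ∀ r ∈ Icc (0 : ℝ) 1, 0 ≤ f r := fun r hr =>
    mul_nonneg (Real.rpow_nonneg (by linarith [hr.2]) _) (Real.rpow_nonneg (hpos r hr).le _)
  have hf_int : IntegrableOn f (Ioc 0 1) :=
    intervalIntegral.integrableOn_deriv_of_nonneg hF hderiv
      fun r hr => hf_nonneg r (Ioo_subset_Icc_self hr)
  have hFTC : ∫ r in Ioc 0 1, f r = F 1 - F 0 := by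
    rw [← intervalIntegral.integral_of_le zero_le_one]
    exact intervalIntegral.integral_eq_sub_of_hasDerivAt_of_le zero_le_one hF hderiv
      ((intervalIntegrable_iff_integrableOn_Ioc_of_le zero_le_one).2 hf_int)
  rw [setLIntegral_congr Ioo_ae_eq_Ioc, ← ofReal_integral_eq_lintegral_ofReal hf_int, hFTC]
  · simp [F, Real.zero_rpow hα.ne']
  · filter_upwards [ae_restrict_mem measurableSet_Ioc] with r hr
    exact hf_nonneg r (Ioc_subset_Icc_self hr)

lemma one_sub_rpow_mul_one_sub_mul_rpow_le_inv {α r ρ : ℝ} (hα : 0 ≤ α) (hr0 : 0 ≤ r)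
    (hr1 : r ≤ 1) (hρ0 : 0 ≤ ρ) (hρ1 : ρ < 1) :
    (1 - r) ^ α * (1 - r * ρ) ^ (-(1 + α)) ≤ (1 - ρ)⁻¹ := by
  have hc : 0 < 1 - r * ρ := one_sub_mul_pos hr0 hr1 hρ1
  calc (1 - r) ^ α * (1 - r * ρ) ^ (-(1 + α))
      ≤ (1 - r * ρ) ^ α * (1 - r * ρ) ^ (-(1 + α)) := by
        gcongr
        nlinarith
    _ = (1 - r * ρ)⁻¹ := by
        rw [← Real.rpow_add hc, show α + -(1 + α) = -1 by ring, Real.rpow_neg_one]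
    _ ≤ (1 - ρ)⁻¹ := inv_anti₀ (by linarith) (by nlinarith)

lemma ofReal_integral_le_lintegral_ofReal {X : Type*} [MeasurableSpace X] {μ : Measure X}
    {f : X → ℝ} (hf : 0 ≤ᵐ[μ] f) : ENNReal.ofReal (∫ x, f x ∂μ) ≤ ∫⁻ x, ENNReal.ofReal (f x) ∂μ :=
  calc ENNReal.ofReal (∫ x, f x ∂μ) ≤ ‖∫ x, f x ∂μ‖ₑ := Real.ofReal_le_enorm _
    _ ≤ ∫⁻ x, ‖f x‖ₑ ∂μ := enorm_integral_le_lintegral_enorm f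
    _ = ∫⁻ x, ENNReal.ofReal (f x) ∂μ :=
      lintegral_congr_ae <| hf.mono fun _ hx => Real.enorm_eq_ofReal hx

lemma rpow_le_rpow_sub_one_mul {x C p : ℝ} (hx : 0 ≤ x) (hxC : x ≤ C) (hp : 1 ≤ p) :
    x ^ p ≤ C ^ (p - 1) * x :=
  calc x ^ p = x ^ (p - 1) * x := by
        rw [← Real.rpow_add_one' hx (by linarith), sub_add_cancel]
    _ ≤ C ^ (p - 1) * x := by gcongr

lemma lintegral_ofReal_rpow_mul_le {X : Type*} [MeasurableSpace X] {μ : Measure X} {f : X → ℝ}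
    {w : X → ℝ≥0∞} {C p : ℝ} (hp : 1 ≤ p) (hf : ∀ᵐ x ∂μ, 0 ≤ f x ∧ f x ≤ C) :
    ∫⁻ x, ENNReal.ofReal (f x ^ p) * w x ∂μ ≤
      ENNReal.ofReal (C ^ (p - 1)) * ∫⁻ x, ENNReal.ofReal (f x) * w x ∂μ := by
  rw [← lintegral_const_mul' _ _ ENNReal.ofReal_ne_top]
  refine lintegral_mono_ae (hf.mono fun x ⟨hx0, hxC⟩ => ?_)
  rw [← mul_assoc, ← ENNReal.ofReal_mul (Real.rpow_nonneg (hx0.trans hxC) _)]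
  gcongr
  exact rpow_le_rpow_sub_one_mul hx0 hxC hp

def psi (α : ℝ) (L : Set ℝ) (r : ℝ) : ℝ := (1 - r) ^ α * ∫ ρ in L, (1 - r * ρ) ^ (-(1 + α))

section psi

variable {α : ℝ} {L : Set ℝ}

lemma psi_nonneg (hL : MeasurableSet L) (hL' : L ⊆ Iio 1) {r : ℝ} (hr0 : 0 ≤ r) (hr1 : r ≤ 1) :
    0 ≤ psi α L r :=
  mul_nonneg (Real.rpow_nonneg (by linarith) _) <| setIntegral_nonneg hL fun ρ hρ =>
    Real.rpow_nonneg (one_sub_mul_pos hr0 hr1 (hL' hρ)).le _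

lemma ofReal_mul_setIntegral_le_setLIntegral (hL : MeasurableSet L) (hL' : L ⊆ Iio 1) {c r : ℝ}
    (hc : 0 ≤ c) (hr0 : 0 ≤ r) (hr1 : r ≤ 1) :
    ENNReal.ofReal (c * ∫ ρ in L, (1 - r * ρ) ^ (-(1 + α))) ≤
      ∫⁻ ρ in L, ENNReal.ofReal (c * (1 - r * ρ) ^ (-(1 + α))) := by
  rw [← integral_const_mul]
  refine ofReal_integral_le_lintegral_ofReal <| (ae_restrict_mem hL).mono fun ρ hρ => ?_
  exact mul_nonneg hc (Real.rpow_nonneg (one_sub_mul_pos hr0 hr1 (hL' hρ)).le _)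

lemma ofReal_psi_le (hα : 0 ≤ α) (hL : MeasurableSet L) (hL' : L ⊆ Ico 0 1) {r : ℝ}
    (hr0 : 0 ≤ r) (hr1 : r ≤ 1) :
    ENNReal.ofReal (psi α L r) ≤ ∫⁻ ρ in L, ENNReal.ofReal (1 - ρ)⁻¹ := by
  refine (ofReal_mul_setIntegral_le_setLIntegral hL (hL'.trans Ico_subset_Iio_self)
    (Real.rpow_nonneg (by linarith) _) hr0 hr1).trans (setLIntegral_mono' hL fun ρ hρ => ?_)
  exact ENNReal.ofReal_le_ofReal <|
    one_sub_rpow_mul_one_sub_mul_rpow_le_inv hα hr0 hr1 (hL' hρ).1 (hL' hρ).2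

lemma lintegral_psi_mul_le (hα : 0 < α) (hL : MeasurableSet L) (hL' : L ⊆ Iio 1) :
    ∫⁻ r in Ioo 0 1, ENNReal.ofReal (psi α L r) * ENNReal.ofReal (1 - r)⁻¹ ≤
      ENNReal.ofReal α⁻¹ * ∫⁻ ρ in L, ENNReal.ofReal (1 - ρ)⁻¹ :=
  calc ∫⁻ r in Ioo 0 1, ENNReal.ofReal (psi α L r) * ENNReal.ofReal (1 - r)⁻¹
      ≤ ∫⁻ r in Ioo 0 1, ∫⁻ ρ in L,
          ENNReal.ofReal ((1 - r) ^ (α - 1) * (1 - r * ρ) ^ (-(1 + α))) := by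
        refine setLIntegral_mono' measurableSet_Ioo fun r hr => ?_
        have h1r : 0 < 1 - r := by linarith [hr.2]
        rw [← ENNReal.ofReal_mul (psi_nonneg hL hL' hr.1.le hr.2.le), psi, mul_right_comm,
          ← div_eq_mul_inv, ← Real.rpow_sub_one h1r.ne']
        exact ofReal_mul_setIntegral_le_setLIntegral hL hL' (Real.rpow_nonneg h1r.le _)
          hr.1.le hr.2.le
    _ = ∫⁻ ρ in L, ∫⁻ r in Ioo 0 1,
          ENNReal.ofReal ((1 - r) ^ (α - 1) * (1 - r * ρ) ^ (-(1 + α))) :=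
        lintegral_lintegral_swap (by fun_prop)
    _ = ∫⁻ ρ in L, ENNReal.ofReal α⁻¹ * ENNReal.ofReal (1 - ρ)⁻¹ := by
        refine setLIntegral_congr_fun hL fun ρ hρ => ?_
        rw [lintegral_one_sub_rpow_mul_one_sub_mul_rpow hα (hL' hρ), mul_inv,
          ENNReal.ofReal_mul (inv_nonneg.2 hα.le)]
    _ = ENNReal.ofReal α⁻¹ * ∫⁻ ρ in L, ENNReal.ofReal (1 - ρ)⁻¹ :=
        lintegral_const_mul' _ _ ENNReal.ofReal_ne_top

end psi

/-- for `α > 0` and measurable `L̂ ⊆ [0,1)` with `∫_{L̂}(1-ρ)^{-1}dρ < ∞`,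
`ψ(r) = (1-r)^α ∫_{L̂}(1-rρ)^{-(1+α)}dρ` lies in `L¹((1-r)^{-1}dr)`, in `L^∞`, and
in `L^p((1-r)^{-1}dr)` for every `1 ≤ p < ∞`. -/
theorem stmt12 (α : ℝ) (hα : 0 < α) (L : Set ℝ) (hL : MeasurableSet L)
    (hL' : L ⊆ Ico (0:ℝ) 1)
    (hfin : (∫⁻ ρ in L, ENNReal.ofReal ((1 - ρ)⁻¹)) < ⊤) :
    ((∫⁻ r in Ioo (0:ℝ) 1,
        ENNReal.ofReal ((1 - r) ^ α * ∫ ρ in L, (1 - r * ρ) ^ (-(1 + α))) *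
          ENNReal.ofReal ((1 - r)⁻¹)) < ⊤) ∧
    (∃ C : ℝ, ∀ r ∈ Ico (0:ℝ) 1,
        (1 - r) ^ α * (∫ ρ in L, (1 - r * ρ) ^ (-(1 + α))) ≤ C) ∧
    (∀ p : ℝ, 1 ≤ p →
      (∫⁻ r in Ioo (0:ℝ) 1,
        ENNReal.ofReal (((1 - r) ^ α * ∫ ρ in L, (1 - r * ρ) ^ (-(1 + α))) ^ p) *
          ENNReal.ofReal ((1 - r)⁻¹)) < ⊤) := by
  have hL'' : L ⊆ Iio 1 := hL'.trans Ico_subset_Iio_self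
  have hL1 : ∫⁻ r in Ioo 0 1, ENNReal.ofReal (psi α L r) * ENNReal.ofReal (1 - r)⁻¹ < ⊤ :=
    (lintegral_psi_mul_le hα hL hL'').trans_lt (ENNReal.mul_lt_top ENNReal.ofReal_lt_top hfin)
  set C := (∫⁻ ρ in L, ENNReal.ofReal (1 - ρ)⁻¹).toReal
  have hLinf : ∀ r ∈ Icc (0 : ℝ) 1, 0 ≤ psi α L r ∧ psi α L r ≤ C := fun r hr =>
    ⟨psi_nonneg hL hL'' hr.1 hr.2,
      (ENNReal.ofReal_le_iff_le_toReal hfin.ne).1 (ofReal_psi_le hα.le hL hL' hr.1 hr.2)⟩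
  refine ⟨hL1, ⟨C, fun r hr => (hLinf r (Ico_subset_Icc_self hr)).2⟩, fun p hp => ?_⟩
  have hLinf_ae : ∀ᵐ r ∂volume.restrict (Ioo 0 1), 0 ≤ psi α L r ∧ psi α L r ≤ C :=
    (ae_restrict_mem measurableSet_Ioo).mono fun r hr => hLinf r (Ioo_subset_Icc_self hr)
  exact (lintegral_ofReal_rpow_mul_le hp hLinf_ae).trans_lt
    (ENNReal.mul_lt_top ENNReal.ofReal_lt_top hL1)
end
end
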